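/- Fix a well order ≺ on N = ℕ^ℕ with the metric d(σ,τ) = 2^{-(min{n : σ_n≠τ_n}-1)}, and let σ ∈ N. Suppose every infinite ≺-interval of N is dense in the Baire space topology of N. Then for every σ ∈ N and every infinite ≺-interval I there exists a σ-good sequence inside I, i.e. a ≺-increasing sequence τ^1 ≺ τ^2 ≺ ⋯ of elements of I with d(σ, τ^n) ≤ 2^{-n-2} for all n ≥ 1. -/

import Mathlib

open Set

/-- The position of the first difference of two distinct sequences. -/
noncomputable def firstDiff (σ τ : ℕ → ℕ) : ℕ := sInf {n | σ n ≠ τ n}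

open scoped Classical in
/-- The metric `d(σ,τ) = 2^{-(min{n : σ n ≠ τ n} - 1)}` on the Baire space `ℕ^ℕ`. -/
noncomputable def dN (σ τ : ℕ → ℕ) : ℝ :=
  if σ = τ then 0 else (2 : ℝ) ^ (1 - (firstDiff σ τ : ℤ))

/-- A subset of `ℕ^ℕ` is a `≺`-interval if it is order convex for `≺`. -/
def IsPrecInterval (prec : (ℕ → ℕ) → (ℕ → ℕ) → Prop) (I : Set (ℕ → ℕ)) : Prop :=
  ∀ a ∈ I, ∀ b ∈ I, ∀ c, prec a c → prec c b → c ∈ I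

/-!
Keep the invariant that infinitely many elements of `I` lie `≺`-above the current point `a`. Those
elements form an infinite interval, which is dense by hypothesis and hence, since the Baire space
has no isolated points, meets every cylinder around `σ` in infinitely many points. The `≺`-least of
them again has infinitely many elements of `I` above it, so the choice can be iterated with
cylinders of increasing length; a cylinder of length `n + 3` lies in the ball of radius `2^{-n-2}`.
-/

open Filter Topology

instance nhdsNE_neBot_nat_pi {α : Type*} [TopologicalSpace α] [Nontrivial α] (x : ℕ → α) :
    (𝓝[≠] x).NeBot := by
  choose y hy using fun n => exists_ne (x n)
  have hne : ∀ n, Function.update x n (y n) ≠ x := fun n h => hy n (by simpa using congrFun h n)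
  have hlim : Tendsto (fun n => Function.update x n (y n)) atTop (𝓝 x) := by
    refine tendsto_pi_nhds.2 fun i => tendsto_const_nhds.congr' ?_
    filter_upwards [eventually_gt_atTop i] with n hn
    simp [Function.update_of_ne hn.ne]
  exact (tendsto_nhdsWithin_iff.2 ⟨hlim, Eventually.of_forall hne⟩).neBot

theorem Dense.inter_open_infinite {X : Type*} [TopologicalSpace X] [T1Space X]
    [∀ x : X, (𝓝[≠] x).NeBot] {D U : Set X} (hD : Dense D) (hU : IsOpen U) (hne : U.Nonempty) :
    (D ∩ U).Infinite := by
  intro hfin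
  obtain ⟨x, hxU, hxD, hxDU⟩ := (hD.sdiff_finite hfin).inter_open_nonempty U hU hne
  exact hxDU ⟨hxD, hxU⟩

theorem exists_mem_inter_infinite_prec {α : Type*} {prec : α → α → Prop} [IsWellOrder α prec]
    {I U : Set α} (h : (I ∩ U).Infinite) : ∃ b ∈ I ∩ U, {x ∈ I | prec b x}.Infinite := by
  obtain ⟨b, hb, hmin⟩ := (IsWellFounded.wf : WellFounded prec).has_min _ h.nonempty
  refine ⟨b, hb, (h.sdiff (finite_singleton b)).mono ?_⟩
  rintro x ⟨hx, hxb⟩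
  exact ⟨hx.1, ((trichotomous_of prec x b).resolve_left (hmin x hx)).resolve_left hxb⟩

theorem IsPrecInterval.sep_prec {prec : (ℕ → ℕ) → (ℕ → ℕ) → Prop} [IsTrans _ prec]
    {I : Set (ℕ → ℕ)} (hI : IsPrecInterval prec I) (a : ℕ → ℕ) :
    IsPrecInterval prec {x ∈ I | prec a x} :=
  fun _ hp _ hq c hpc hcq => ⟨hI _ hp.1 _ hq.1 c hpc hcq, _root_.trans hp.2 hpc⟩

theorem exists_prec_mem_cylinder_infinite_prec {prec : (ℕ → ℕ) → (ℕ → ℕ) → Prop}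
    [IsWellOrder _ prec] (hdense : ∀ I, IsPrecInterval prec I → I.Infinite → Dense I)
    {I : Set (ℕ → ℕ)} (hI : IsPrecInterval prec I) {a : ℕ → ℕ}
    (ha : {x ∈ I | prec a x}.Infinite) (σ : ℕ → ℕ) (m : ℕ) :
    ∃ b ∈ I, prec a b ∧ b ∈ PiNat.cylinder σ m ∧ {x ∈ I | prec b x}.Infinite := by
  obtain ⟨b, ⟨⟨hbI, hab⟩, hbσ⟩, hb⟩ := exists_mem_inter_infinite_prec (prec := prec)
    ((hdense _ (hI.sep_prec a) ha).inter_open_infinite (PiNat.isOpen_cylinder _ σ m)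
      ⟨σ, PiNat.self_mem_cylinder σ m⟩)
  exact ⟨b, hbI, hab, hbσ, hb.mono fun x hx => ⟨hx.1.1, hx.2⟩⟩

theorem exists_seq_of_forall_mem_exists {α : Type*} {S : Set α} {r : α → α → Prop}
    {C : ℕ → Set α} (h₀ : S.Nonempty) (hstep : ∀ n, ∀ a ∈ S, ∃ b ∈ S, r a b ∧ b ∈ C n) :
    ∃ τ : ℕ → α, ∀ n, τ n ∈ S ∧ r (τ n) (τ (n + 1)) ∧ τ (n + 1) ∈ C n := by
  choose! f hfS hfr hfC using hstep
  obtain ⟨a, ha⟩ := h₀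
  let τ : ℕ → α := fun n => Nat.rec a f n
  have hτS : ∀ n, τ n ∈ S := fun n => Nat.rec ha (fun k ih => hfS k _ ih) n
  exact ⟨τ, fun n => ⟨hτS n, hfr n _ (hτS n), hfC n _ (hτS n)⟩⟩

theorem dN_le_of_mem_cylinder {σ τ : ℕ → ℕ} {m : ℕ} (h : τ ∈ PiNat.cylinder σ m) :
    dN σ τ ≤ 2 ^ (1 - (m : ℤ)) := by
  unfold dN
  split_ifs with heq
  · positivity
  · have hdiff : σ (firstDiff σ τ) ≠ τ (firstDiff σ τ) := Nat.sInf_mem (Function.ne_iff.mp heq)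
    have hm : m ≤ firstDiff σ τ := by
      by_contra! hlt
      exact hdiff (h _ hlt).symm
    exact zpow_le_zpow_right₀ one_le_two (by omega)

theorem stmt17 (prec : (ℕ → ℕ) → (ℕ → ℕ) → Prop)
    (hwo : IsWellOrder (ℕ → ℕ) prec)
    (hdense : ∀ I : Set (ℕ → ℕ), IsPrecInterval prec I → I.Infinite → Dense I) :
    ∀ σ : ℕ → ℕ, ∀ I : Set (ℕ → ℕ), IsPrecInterval prec I → I.Infinite →
      ∃ τ : ℕ → (ℕ → ℕ),
        (∀ n, τ n ∈ I) ∧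
        (∀ n, prec (τ n) (τ (n + 1))) ∧
        ∀ n, 1 ≤ n → dN σ (τ n) ≤ (2:ℝ) ^ (-(n:ℤ) - 2) := by
  intro σ I hI hIinf
  obtain ⟨b₀, hb₀, hb₀I⟩ := exists_mem_inter_infinite_prec (prec := prec) (U := univ)
    (by rwa [inter_univ])
  obtain ⟨τ, hτ⟩ := exists_seq_of_forall_mem_exists (S := {a ∈ I | {x ∈ I | prec a x}.Infinite})
    (C := fun n => PiNat.cylinder σ (n + 4)) ⟨b₀, hb₀.1, hb₀I⟩ fun n a ha => by
      obtain ⟨b, hbI, hab, hbσ, hb⟩ :=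
        exists_prec_mem_cylinder_infinite_prec hdense hI ha.2 σ (n + 4)
      exact ⟨b, ⟨hbI, hb⟩, hab, hbσ⟩
  refine ⟨τ, fun n => (hτ n).1.1, fun n => (hτ n).2.1, ?_⟩
  rintro (_ | n) hn
  · omega
  calc dN σ (τ (n + 1)) ≤ 2 ^ (1 - ((n + 4 : ℕ) : ℤ)) := dN_le_of_mem_cylinder (hτ n).2.2
    _ = 2 ^ (-((n + 1 : ℕ) : ℤ) - 2) := by push_cast; ring_nf
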